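/- arXiv:2505.10404 — 6 statements merged into one kernel-verified Lean document; each statement's English description precedes it below -/
import Mathlib

section
/- Let A be a symmetric positive definite n×n matrix, B an N×n matrix, and M a symmetric positive definite N×N matrix. If for all nonzero u ∈ ℝⁿ one has uᵀ Bᵀ M⁻¹ B u ≤ d·uᵀ A u, then for all nonzero p ∈ ℝ^N one has pᵀ B A⁻¹ Bᵀ p ≤ d·pᵀ M p. -/
/-!
With `u = A⁻¹ Bᵀ p`, the quantity `t = pᵀ B A⁻¹ Bᵀ p` equals both `uᵀ A u` and `pᵀ B u = ⟪p, M⁻¹ B u⟫_M`.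
Cauchy–Schwarz for the inner product `⟪x, y⟫_M = xᵀ M y` gives
`t² ≤ (pᵀ M p) (uᵀ Bᵀ M⁻¹ B u) ≤ (pᵀ M p) · d t`, hence `t ≤ d pᵀ M p`.
-/

open Matrix

variable {ι κ R : Type*} [Fintype ι] [Fintype κ]

theorem Matrix.dotProduct_mul_mul_transpose_mulVec [CommSemiring R] (B : Matrix ι κ R)
    (C : Matrix κ κ R) (p : ι → R) :
    p ⬝ᵥ (B * C * Bᵀ) *ᵥ p = (Bᵀ *ᵥ p) ⬝ᵥ C *ᵥ (Bᵀ *ᵥ p) := by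
  rw [← mulVec_mulVec, ← mulVec_mulVec, dotProduct_mulVec, mulVec_transpose]

theorem Matrix.dotProduct_nonsing_inv_mulVec [CommRing R] [DecidableEq κ] {C : Matrix κ κ R}
    (hC : IsUnit C.det) (w : κ → R) :
    w ⬝ᵥ C⁻¹ *ᵥ w = (C⁻¹ *ᵥ w) ⬝ᵥ C *ᵥ (C⁻¹ *ᵥ w) := by
  rw [mulVec_mulVec, mul_nonsing_inv _ hC, one_mulVec, dotProduct_comm]

theorem Matrix.PosSemidef.dotProduct_mulVec_sq_le {M : Matrix ι ι ℝ} (hM : M.PosSemidef)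
    (p q : ι → ℝ) : (p ⬝ᵥ M *ᵥ q) ^ 2 ≤ (p ⬝ᵥ M *ᵥ p) * (q ⬝ᵥ M *ᵥ q) := by
  let := M.toSeminormedAddCommGroup hM
  let := M.toInnerProductSpace hM
  have hinner (x y : ι → ℝ) : inner ℝ x y = x ⬝ᵥ M *ᵥ y := by
    change (M *ᵥ y) ⬝ᵥ star x = _
    rw [star_trivial, dotProduct_comm]
  simpa only [hinner, sq] using real_inner_mul_inner_self_le p q

theorem Matrix.PosDef.sq_dotProduct_mulVec_le [DecidableEq ι] {M : Matrix ι ι ℝ}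
    (hM : M.PosDef) (B : Matrix ι κ ℝ) (p : ι → ℝ) (u : κ → ℝ) :
    (p ⬝ᵥ B *ᵥ u) ^ 2 ≤ (p ⬝ᵥ M *ᵥ p) * (u ⬝ᵥ (Bᵀ * M⁻¹ * B) *ᵥ u) := by
  have hdet : IsUnit M.det := (isUnit_iff_isUnit_det M).mp hM.isUnit
  have hMq : M *ᵥ (M⁻¹ *ᵥ B *ᵥ u) = B *ᵥ u := by
    rw [mulVec_mulVec, mul_nonsing_inv _ hdet, one_mulVec]
  calc (p ⬝ᵥ B *ᵥ u) ^ 2 = (p ⬝ᵥ M *ᵥ (M⁻¹ *ᵥ B *ᵥ u)) ^ 2 := by rw [hMq]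
    _ ≤ (p ⬝ᵥ M *ᵥ p) * ((M⁻¹ *ᵥ B *ᵥ u) ⬝ᵥ M *ᵥ (M⁻¹ *ᵥ B *ᵥ u)) :=
      hM.posSemidef.dotProduct_mulVec_sq_le p _
    _ = (p ⬝ᵥ M *ᵥ p) * (u ⬝ᵥ (Bᵀ * M⁻¹ * B) *ᵥ u) := by
      have hcongr := dotProduct_mul_mul_transpose_mulVec Bᵀ M⁻¹ u
      rw [transpose_transpose] at hcongr
      rw [hcongr, dotProduct_nonsing_inv_mulVec hdet]

theorem Matrix.dotProduct_mul_inv_mul_transpose_mulVec_le [DecidableEq ι] [DecidableEq κ]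
    {A : Matrix κ κ ℝ} (hA : IsUnit A.det) {M : Matrix ι ι ℝ} (hM : M.PosDef)
    {B : Matrix ι κ ℝ} {d : ℝ} (hd : 0 ≤ d)
    (h : ∀ u, u ⬝ᵥ (Bᵀ * M⁻¹ * B) *ᵥ u ≤ d * (u ⬝ᵥ A *ᵥ u)) (p : ι → ℝ) :
    p ⬝ᵥ (B * A⁻¹ * Bᵀ) *ᵥ p ≤ d * (p ⬝ᵥ M *ᵥ p) := by
  set u := A⁻¹ *ᵥ Bᵀ *ᵥ p
  have htu : p ⬝ᵥ (B * A⁻¹ * Bᵀ) *ᵥ p = p ⬝ᵥ B *ᵥ u := by rw [← mulVec_mulVec, ← mulVec_mulVec]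
  have htA : p ⬝ᵥ (B * A⁻¹ * Bᵀ) *ᵥ p = u ⬝ᵥ A *ᵥ u := by
    rw [dotProduct_mul_mul_transpose_mulVec, dotProduct_nonsing_inv_mulVec hA]
  have hpMp : 0 ≤ p ⬝ᵥ M *ᵥ p := by
    simpa only [star_trivial] using hM.posSemidef.dotProduct_mulVec_nonneg p
  have hsq : (p ⬝ᵥ (B * A⁻¹ * Bᵀ) *ᵥ p) ^ 2
      ≤ (p ⬝ᵥ M *ᵥ p) * (d * (p ⬝ᵥ (B * A⁻¹ * Bᵀ) *ᵥ p)) := by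
    rw [htu]
    calc (p ⬝ᵥ B *ᵥ u) ^ 2 ≤ (p ⬝ᵥ M *ᵥ p) * (u ⬝ᵥ (Bᵀ * M⁻¹ * B) *ᵥ u) :=
          hM.sq_dotProduct_mulVec_le B p u
      _ ≤ (p ⬝ᵥ M *ᵥ p) * (d * (p ⬝ᵥ B *ᵥ u)) := by rw [← htu, htA]; gcongr; exact h u
  nlinarith [mul_nonneg hd hpMp]

/-- duality between the Rayleigh quotients of BᵀM⁻¹B vs A and BA⁻¹Bᵀ vs M. -/
theorem stmt2 {n N : ℕ} (A : Matrix (Fin n) (Fin n) ℝ) (hA : A.PosDef)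
    (M : Matrix (Fin N) (Fin N) ℝ) (hM : M.PosDef)
    (B : Matrix (Fin N) (Fin n) ℝ) (d : ℝ) (hd : 0 < d)
    (h : ∀ u : Fin n → ℝ, u ≠ 0 →
      u ⬝ᵥ ((Bᵀ * M⁻¹ * B) *ᵥ u) ≤ d * (u ⬝ᵥ (A *ᵥ u))) :
    ∀ p : Fin N → ℝ, p ≠ 0 →
      p ⬝ᵥ ((B * A⁻¹ * Bᵀ) *ᵥ p) ≤ d * (p ⬝ᵥ (M *ᵥ p)) := by
  have h' (u : Fin n → ℝ) : u ⬝ᵥ (Bᵀ * M⁻¹ * B) *ᵥ u ≤ d * (u ⬝ᵥ A *ᵥ u) := by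
    rcases eq_or_ne u 0 with rfl | hu
    · simp
    · exact h u hu
  intro p _
  exact dotProduct_mul_inv_mul_transpose_mulVec_le
    ((isUnit_iff_isUnit_det A).mp hA.isUnit) hM hd.le h' p
end

section
/- Let m, ŝ, s be real numbers with 0 < c₁ ≤ s/ŝ ≤ d and 0 < m/ŝ ≤ 1 (where ŝ > 0). Then the roots λ± = (1/2)(m/ŝ) ± (1/2)√((m/ŝ)² + 4 s/ŝ) of λ² − (m/ŝ)λ − s/ŝ = 0 satisfy λ₊ ∈ [√c₁, (1+√(1+4d))/2] and λ₋ ∈ [−d/√c₁, −2c₁/(1+√(1+4d))]. -/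
/-! Write t = m/ŝ and r = s/ŝ, so that λ± = t/2 ± √(t² + 4r)/2. Since 2√c₁ ≤ 2√r ≤ √(t² + 4r) ≤ √(1 + 4d)
for 0 < t ≤ 1, the bounds on λ₊ follow from monotonicity of the square root. Vieta's formula λ₊λ₋ = −r then
transfers them to λ₋ = −r/λ₊. -/

open Real

theorem sqrt_le_half_add_half_sqrt {c t r : ℝ} (ht : 0 ≤ t) (hcr : c ≤ r) :
    √c ≤ 1/2 * t + 1/2 * √(t^2 + 4*r) := by
  have h4c : √(4 * c) = 2 * √c := by
    rw [sqrt_mul zero_le_four, show (4 : ℝ) = 2 ^ 2 by norm_num, sqrt_sq zero_le_two]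
  have : √(4 * c) ≤ √(t^2 + 4*r) := sqrt_le_sqrt (by nlinarith)
  linarith

theorem half_add_half_sqrt_le {t r d : ℝ} (ht : |t| ≤ 1) (hrd : r ≤ d) :
    1/2 * t + 1/2 * √(t^2 + 4*r) ≤ (1 + √(1 + 4*d)) / 2 := by
  have ht2 : t^2 ≤ 1 := (sq_le_one_iff_abs_le_one t).mpr ht
  have : √(t^2 + 4*r) ≤ √(1 + 4*d) := sqrt_le_sqrt (by linarith)
  linarith [le_abs_self t]

theorem half_add_half_sqrt_mul_half_sub_half_sqrt {t r : ℝ} (h : 0 ≤ t^2 + 4*r) :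
    (1/2 * t + 1/2 * √(t^2 + 4*r)) * (1/2 * t - 1/2 * √(t^2 + 4*r)) = -r := by
  linear_combination (-1/4 : ℝ) * sq_sqrt h

theorem neg_div_le_and_le_neg_div_of_mul_eq_neg {l u c d p q r : ℝ} (hl : 0 < l) (hlp : l ≤ p)
    (hpu : p ≤ u) (hc : 0 ≤ c) (hcr : c ≤ r) (hrd : r ≤ d) (hpq : p * q = -r) :
    -(d / l) ≤ q ∧ q ≤ -(c / u) := by
  have hp : 0 < p := hl.trans_le hlp
  have hq : q = -(r / p) := by field_simp; linarith
  subst hq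
  constructor
  · gcongr; linarith
  · gcongr; linarith

theorem stmt4_general (c₁ d m s shat : ℝ)
    (hc₁ : 0 < c₁)
    (hlow : c₁ ≤ s / shat) (hup : s / shat ≤ d)
    (hm : 0 < m / shat) (hm1 : m / shat ≤ 1)
    (lamp lamm : ℝ)
    (hp : lamp = (1/2) * (m / shat) + (1/2) * Real.sqrt ((m / shat)^2 + 4 * (s / shat)))
    (hn : lamm = (1/2) * (m / shat) - (1/2) * Real.sqrt ((m / shat)^2 + 4 * (s / shat))) :
    (Real.sqrt c₁ ≤ lamp ∧ lamp ≤ (1 + Real.sqrt (1 + 4 * d)) / 2) ∧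
    (-(d / Real.sqrt c₁) ≤ lamm ∧ lamm ≤ -(2 * c₁ / (1 + Real.sqrt (1 + 4 * d)))) := by
  have hlamp_low : √c₁ ≤ lamp := hp ▸ sqrt_le_half_add_half_sqrt hm.le hlow
  have hlamp_up : lamp ≤ (1 + √(1 + 4 * d)) / 2 :=
    hp ▸ half_add_half_sqrt_le (abs_le.mpr ⟨by linarith, hm1⟩) hup
  have hvieta : lamp * lamm = -(s / shat) := by
    rw [hp, hn]
    exact half_add_half_sqrt_mul_half_sub_half_sqrt (by linarith [sq_nonneg (m / shat)])
  refine ⟨⟨hlamp_low, hlamp_up⟩, ?_⟩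
  rw [mul_comm 2 c₁, ← div_div_eq_mul_div]
  exact neg_div_le_and_le_neg_div_of_mul_eq_neg (sqrt_pos.mpr hc₁) hlamp_low hlamp_up hc₁.le
    hlow hup hvieta

/-- localization of the two roots of λ² − (m/ŝ)λ − s/ŝ = 0. -/
theorem stmt4 (c₁ d m s shat : ℝ)
    (hshat : 0 < shat) (hc₁ : 0 < c₁)
    (hlow : c₁ ≤ s / shat) (hup : s / shat ≤ d)
    (hm : 0 < m / shat) (hm1 : m / shat ≤ 1)
    (lamp lamm : ℝ)
    (hp : lamp = (1/2) * (m / shat) + (1/2) * Real.sqrt ((m / shat)^2 + 4 * (s / shat)))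
    (hn : lamm = (1/2) * (m / shat) - (1/2) * Real.sqrt ((m / shat)^2 + 4 * (s / shat))) :
    (Real.sqrt c₁ ≤ lamp ∧ lamp ≤ (1 + Real.sqrt (1 + 4 * d)) / 2) ∧
    (-(d / Real.sqrt c₁) ≤ lamm ∧ lamm ≤ -(2 * c₁ / (1 + Real.sqrt (1 + 4 * d)))) :=
  stmt4_general c₁ d m s shat hc₁ hlow hup hm hm1 lamp lamm hp hn
end

section
/- Let A be symmetric positive definite n×n, B an N×n matrix, M a diagonal positive definite N×N matrix with pᵀBA⁻¹Bᵀp ≤ d·pᵀMp for all p. Then ‖A⁻¹Bᵀ‖² ≤ d·λmax(M)/λmin(A), where ‖·‖ is the spectral norm. -/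
open Matrix

/-!
With `q = A⁻¹Bᵀp` one has `qᵀAq = pᵀBA⁻¹Bᵀp`, so the hypothesis gives
`λmin(A)‖q‖² ≤ qᵀAq ≤ d·pᵀMp ≤ d·λmax(M)‖p‖²`; the two outer inequalities are the
Rayleigh bounds of a symmetric matrix, obtained by diagonalising it.
-/

namespace Matrix

variable {ι κ R : Type*} [Fintype ι] [Fintype κ]

lemma dotProduct_diagonal_mulVec_le_of_le [CommRing R] [LinearOrder R] [IsOrderedRing R]
    [DecidableEq ι] {f g : ι → R} (hfg : ∀ i, f i ≤ g i) (x : ι → R) :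
    x ⬝ᵥ (diagonal f *ᵥ x) ≤ x ⬝ᵥ (diagonal g *ᵥ x) := by
  simp only [dotProduct, mulVec_diagonal]
  refine Finset.sum_le_sum fun i _ => ?_
  rw [mul_left_comm, mul_left_comm (x i) (g i)]
  exact mul_le_mul_of_nonneg_right (hfg i) (mul_self_nonneg (x i))

lemma dotProduct_diagonal_const_mulVec [CommSemiring R] [DecidableEq ι] (c : R) (x : ι → R) :
    x ⬝ᵥ (diagonal (fun _ => c) *ᵥ x) = c * (x ⬝ᵥ x) := by
  simp [mulVec_diagonal, dotProduct, Finset.mul_sum, mul_left_comm]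

lemma dotProduct_mul_mul_transpose_mulVec_s7 [CommSemiring R] (U : Matrix ι κ R) (D : Matrix κ κ R)
    (x : ι → R) :
    x ⬝ᵥ ((U * D * Uᵀ) *ᵥ x) = (Uᵀ *ᵥ x) ⬝ᵥ (D *ᵥ (Uᵀ *ᵥ x)) := by
  rw [← mulVec_mulVec, ← mulVec_mulVec, dotProduct_mulVec, mulVec_transpose]

lemma dotProduct_mulVec_inv_mul_transpose_mulVec [CommRing R] [DecidableEq ι]
    {A : Matrix ι ι R} (hA : IsUnit A.det) (B : Matrix κ ι R) (p : κ → R) :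
    ((A⁻¹ * Bᵀ) *ᵥ p) ⬝ᵥ (A *ᵥ ((A⁻¹ * Bᵀ) *ᵥ p)) = p ⬝ᵥ ((B * A⁻¹ * Bᵀ) *ᵥ p) := by
  rw [mulVec_mulVec, ← Matrix.mul_assoc, mul_nonsing_inv A hA, Matrix.one_mul, ← mulVec_mulVec,
    dotProduct_mulVec, ← mulVec_transpose, transpose_transpose, dotProduct_comm, mulVec_mulVec,
    mulVec_mulVec]

lemma IsHermitian.mul_dotProduct_self_le [DecidableEq ι] {A : Matrix ι ι ℝ} (hA : A.IsHermitian)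
    {c : ℝ} (hc : ∀ i, c ≤ hA.eigenvalues i) (x : ι → ℝ) :
    c * (x ⬝ᵥ x) ≤ x ⬝ᵥ (A *ᵥ x) := by
  set U : Matrix ι ι ℝ := (hA.eigenvectorUnitary : Matrix ι ι ℝ)
  have hUUt : U * Uᵀ = 1 := by
    simpa [star_eq_conjTranspose] using Unitary.coe_mul_star_self hA.eigenvectorUnitary
  have hA_eq : A = U * diagonal hA.eigenvalues * Uᵀ := by
    conv_lhs => rw [hA.spectral_theorem]
    simp [U, star_eq_conjTranspose]
  have hx : x ⬝ᵥ x = (Uᵀ *ᵥ x) ⬝ᵥ (Uᵀ *ᵥ x) := by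
    simpa [hUUt] using dotProduct_mul_mul_transpose_mulVec_s7 U 1 x
  calc c * (x ⬝ᵥ x) = (Uᵀ *ᵥ x) ⬝ᵥ (diagonal (fun _ => c) *ᵥ (Uᵀ *ᵥ x)) := by
        rw [dotProduct_diagonal_const_mulVec, hx]
    _ ≤ (Uᵀ *ᵥ x) ⬝ᵥ (diagonal hA.eigenvalues *ᵥ (Uᵀ *ᵥ x)) :=
        dotProduct_diagonal_mulVec_le_of_le hc _
    _ = x ⬝ᵥ (A *ᵥ x) := by
        rw [← dotProduct_mul_mul_transpose_mulVec_s7, ← hA_eq]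

end Matrix

theorem stmt7_general {n N : ℕ} (hn : 0 < n)
    (A : Matrix (Fin n) (Fin n) ℝ) (hA : A.PosDef)
    (B : Matrix (Fin N) (Fin n) ℝ)
    (Md : Fin N → ℝ)
    (M : Matrix (Fin N) (Fin N) ℝ) (hM : M = Matrix.diagonal Md)
    (d : ℝ) (hd : 0 < d)
    (h : ∀ p : Fin N → ℝ, p ⬝ᵥ ((B * A⁻¹ * Bᵀ) *ᵥ p) ≤ d * (p ⬝ᵥ (M *ᵥ p)))
    (lmaxM lminA : ℝ)
    (hlmax : lmaxM = ⨆ i, Md i)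
    (hlmin : lminA = ⨅ i, hA.1.eigenvalues i) :
    ∀ p : Fin N → ℝ,
      ((A⁻¹ * Bᵀ) *ᵥ p) ⬝ᵥ ((A⁻¹ * Bᵀ) *ᵥ p) ≤
        d * lmaxM / lminA * (p ⬝ᵥ p) := by
  intro p
  have : Nonempty (Fin n) := ⟨⟨0, hn⟩⟩
  have hlminA_pos : 0 < lminA := by
    obtain ⟨i, hi⟩ := exists_eq_ciInf_of_finite (f := hA.1.eigenvalues)
    exact hlmin ▸ hi ▸ hA.eigenvalues_pos i
  have hlminA_le : ∀ i, lminA ≤ hA.1.eigenvalues i :=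
    fun i => hlmin ▸ ciInf_le (Finite.bddBelow_range _) i
  have hMd_le : ∀ i, Md i ≤ lmaxM := fun i => hlmax ▸ le_ciSup (Finite.bddAbove_range _) i
  set q := (A⁻¹ * Bᵀ) *ᵥ p
  have key : lminA * (q ⬝ᵥ q) ≤ d * lmaxM * (p ⬝ᵥ p) :=
    calc lminA * (q ⬝ᵥ q) ≤ q ⬝ᵥ (A *ᵥ q) := hA.1.mul_dotProduct_self_le hlminA_le q
      _ = p ⬝ᵥ ((B * A⁻¹ * Bᵀ) *ᵥ p) :=
        dotProduct_mulVec_inv_mul_transpose_mulVec hA.det_pos.ne'.isUnit B p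
      _ ≤ d * (p ⬝ᵥ (M *ᵥ p)) := h p
      _ ≤ d * (p ⬝ᵥ (diagonal (fun _ => lmaxM) *ᵥ p)) := by
        rw [hM]; gcongr; exact dotProduct_diagonal_mulVec_le_of_le hMd_le p
      _ = d * lmaxM * (p ⬝ᵥ p) := by rw [dotProduct_diagonal_const_mulVec, mul_assoc]
  rwa [div_mul_eq_mul_div, le_div_iff₀ hlminA_pos, mul_comm]

/-- ‖A⁻¹Bᵀ‖² ≤ d·λmax(M)/λmin(A), stated via the squared Euclidean
norm of (A⁻¹Bᵀ)p against the squared norm of p. -/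
theorem stmt7 {n N : ℕ} (hn : 0 < n) (hNpos : 0 < N)
    (A : Matrix (Fin n) (Fin n) ℝ) (hA : A.PosDef)
    (B : Matrix (Fin N) (Fin n) ℝ)
    (Md : Fin N → ℝ) (hMd : ∀ i, 0 < Md i)
    (M : Matrix (Fin N) (Fin N) ℝ) (hM : M = Matrix.diagonal Md)
    (d : ℝ) (hd : 0 < d)
    (h : ∀ p : Fin N → ℝ, p ⬝ᵥ ((B * A⁻¹ * Bᵀ) *ᵥ p) ≤ d * (p ⬝ᵥ (M *ᵥ p)))
    (lmaxM lminA : ℝ)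
    (hlmax : lmaxM = ⨆ i, Md i)
    (hlmin : lminA = ⨅ i, hA.1.eigenvalues i) :
    ∀ p : Fin N → ℝ,
      ((A⁻¹ * Bᵀ) *ᵥ p) ⬝ᵥ ((A⁻¹ * Bᵀ) *ᵥ p) ≤
        d * lmaxM / lminA * (p ⬝ᵥ p) :=
  stmt7_general hn A hA B Md M hM d hd h lmaxM lminA hlmax hlmin
end

section
/- Let a = (a₁,…,a_N) and b = (γ, b₂,…,b_N) be vectors in ℝ^N with ‖b‖ = 1 and γ ≠ 0. Write a = αb + c with α = bᵀa and bᵀc = 0. Then Σᵢ aᵢ² ≤ α² + (1/γ²)·Σ_{i=2}^N cᵢ². -/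
open Matrix Finset

/-! Split `a = α b + c` orthogonally, so that `Σ aᵢ² = α² + Σ cᵢ²`. It remains to bound `c₁²`:
orthogonality gives `γ c₁ = -Σ_{i≥2} bᵢ cᵢ`, and Cauchy–Schwarz together with
`Σ_{i≥2} bᵢ² = 1 - γ²` yields `γ² c₁² ≤ (1 - γ²) Σ_{i≥2} cᵢ²`. -/

section DotProduct

variable {ι R : Type*} [Fintype ι]

lemma dotProduct_self_eq_sum_sq [CommSemiring R] (v : ι → R) : v ⬝ᵥ v = ∑ i, v i ^ 2 := by
  simp only [dotProduct, sq]

lemma dotProduct_sub_smul_eq_zero [CommRing R] {a b : ι → R} (hb : b ⬝ᵥ b = 1) :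
    b ⬝ᵥ (a - (b ⬝ᵥ a) • b) = 0 := by
  rw [dotProduct_sub, dotProduct_smul, hb, smul_eq_mul, mul_one, sub_self]

lemma dotProduct_self_smul_add_of_orthogonal [CommRing R] {b c : ι → R} (α : R)
    (hb : b ⬝ᵥ b = 1) (hbc : b ⬝ᵥ c = 0) :
    (α • b + c) ⬝ᵥ (α • b + c) = α ^ 2 + c ⬝ᵥ c := by
  simp only [add_dotProduct, dotProduct_add, smul_dotProduct, dotProduct_smul, smul_eq_mul,
    hb, hbc, dotProduct_comm c b]
  ring

lemma sq_mul_sq_le_of_dotProduct_eq_zero [CommRing R] [LinearOrder R] [IsStrictOrderedRing R]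
    [DecidableEq ι] {b c : ι → R} (hbc : b ⬝ᵥ c = 0) (i : ι) :
    b i ^ 2 * c i ^ 2 ≤ (∑ j ∈ univ.erase i, b j ^ 2) * ∑ j ∈ univ.erase i, c j ^ 2 := by
  have hsplit : b i * c i = -∑ j ∈ univ.erase i, b j * c j := by
    rw [eq_neg_iff_add_eq_zero, add_sum_erase _ (fun j ↦ b j * c j) (mem_univ i)]
    exact hbc
  calc b i ^ 2 * c i ^ 2 = (∑ j ∈ univ.erase i, b j * c j) ^ 2 := by
        rw [← mul_pow, hsplit, neg_sq]
    _ ≤ _ := sum_mul_sq_le_sq_mul_sq _ b c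

lemma sum_sq_le_of_dotProduct_eq_zero [DecidableEq ι] {b c : ι → ℝ} (hb : b ⬝ᵥ b = 1)
    (hbc : b ⬝ᵥ c = 0) {i : ι} (hi : b i ≠ 0) :
    ∑ j, c j ^ 2 ≤ 1 / b i ^ 2 * ∑ j ∈ univ.erase i, c j ^ 2 := by
  have hb_split : b i ^ 2 + ∑ j ∈ univ.erase i, b j ^ 2 = 1 := by
    rw [add_sum_erase _ (fun j ↦ b j ^ 2) (mem_univ i), ← dotProduct_self_eq_sum_sq, hb]
  have hkey := sq_mul_sq_le_of_dotProduct_eq_zero hbc i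
  rw [← add_sum_erase _ _ (mem_univ i), one_div, ← div_eq_inv_mul,
    le_div_iff₀ (by positivity)]
  linear_combination hkey + (∑ j ∈ univ.erase i, c j ^ 2) * hb_split

end DotProduct

/-- for a = αb + c with b a unit vector, b 0 = γ ≠ 0 and bᵀc = 0,
one has Σ aᵢ² ≤ α² + (1/γ²)·Σ_{i≥2} cᵢ². -/
theorem stmt10 {n : ℕ} (a b : Fin (n + 1) → ℝ)
    (hb : b ⬝ᵥ b = 1) (γ : ℝ) (hγdef : γ = b 0) (hγ : γ ≠ 0)
    (α : ℝ) (hα : α = b ⬝ᵥ a)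
    (c : Fin (n + 1) → ℝ) (hc : c = a - α • b) :
    ∑ i, (a i) ^ 2 ≤ α ^ 2 + (1 / γ ^ 2) * ∑ i ∈ Finset.univ.erase 0, (c i) ^ 2 := by
  subst hγdef
  have hbc : b ⬝ᵥ c = 0 := hc ▸ hα ▸ dotProduct_sub_smul_eq_zero hb
  have ha : a = α • b + c := by rw [hc, add_sub_cancel]
  rw [← dotProduct_self_eq_sum_sq, ha, dotProduct_self_smul_add_of_orthogonal α hb hbc,
    dotProduct_self_eq_sum_sq]
  gcongr
  exact sum_sq_le_of_dotProduct_eq_zero hb hbc hγ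
end

section
/- Let e denote the normalized all-ones vector in ℝ^N and let Bᵀ be a matrix whose null space is exactly span(e). Let A be symmetric positive definite, w a unit vector with γ = wᵀe ≠ 0, ρ > 0, and M symmetric positive definite. Then the matrix S = ρ w wᵀ + B A⁻¹ Bᵀ is symmetric positive definite (in particular nonsingular). -/
/-!
Both summands of `S` are positive semidefinite, so `S` is positive definite as soon as no nonzero
`x` is isotropic for both. Isotropy for `B A⁻¹ Bᵀ` forces `Bᵀ x = 0` because `A⁻¹` is positive
definite, hence `x = c e`; isotropy for `ρ w wᵀ` then gives `c (wᵀe) = 0`, so `c = 0`.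
-/

open Matrix

namespace Matrix

variable {m n R : Type*} [Fintype n]

theorem PosSemidef.posDef_add_of_dotProduct_mulVec_eq_zero
    [Ring R] [PartialOrder R] [StarRing R] [IsOrderedAddMonoid R]
    {P Q : Matrix n n R} (hP : P.PosSemidef) (hQ : Q.PosSemidef)
    (h : ∀ x, star x ⬝ᵥ (P *ᵥ x) = 0 → star x ⬝ᵥ (Q *ᵥ x) = 0 → x = 0) :
    (P + Q).PosDef := by
  refine PosDef.of_dotProduct_mulVec_pos (hP.isHermitian.add hQ.isHermitian) fun x hx => ?_
  have hPx := hP.dotProduct_mulVec_nonneg x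
  have hQx := hQ.dotProduct_mulVec_nonneg x
  rw [add_mulVec, dotProduct_add]
  refine (add_nonneg hPx hQx).lt_of_ne' fun hsum => hx ?_
  obtain ⟨hP0, hQ0⟩ := (add_eq_zero_iff_of_nonneg hPx hQx).1 hsum
  exact h x hP0 hQ0

theorem star_dotProduct_mul_mul_conjTranspose_mulVec [Fintype m] [Ring R] [StarRing R]
    (A : Matrix n n R) (B : Matrix m n R) (x : m → R) :
    star x ⬝ᵥ ((B * A * Bᴴ) *ᵥ x) = star (Bᴴ *ᵥ x) ⬝ᵥ (A *ᵥ (Bᴴ *ᵥ x)) := by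
  simp only [star_mulVec, conjTranspose_conjTranspose, dotProduct_mulVec, vecMul_vecMul]

theorem PosDef.star_dotProduct_mul_mul_conjTranspose_mulVec_eq_zero_iff [Fintype m]
    [Ring R] [PartialOrder R] [StarRing R] {A : Matrix n n R} (hA : A.PosDef)
    (B : Matrix m n R) (x : m → R) :
    star x ⬝ᵥ ((B * A * Bᴴ) *ᵥ x) = 0 ↔ Bᴴ *ᵥ x = 0 := by
  rw [star_dotProduct_mul_mul_conjTranspose_mulVec]
  refine ⟨fun h => ?_, fun h => by simp [h]⟩
  by_contra hne
  exact (hA.dotProduct_mulVec_pos hne).ne' h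

theorem dotProduct_vecMulVec_mulVec [CommSemiring R] (x u v y : n → R) :
    x ⬝ᵥ (vecMulVec u v *ᵥ y) = (x ⬝ᵥ u) * (v ⬝ᵥ y) := by
  rw [vecMulVec_mulVec, op_smul_eq_smul, dotProduct_smul, smul_eq_mul, mul_comm]

end Matrix

theorem stmt13_general {n N : ℕ}
    (B : Matrix (Fin N) (Fin n) ℝ)
    (A : Matrix (Fin n) (Fin n) ℝ) (hA : A.PosDef)
    (e : Fin N → ℝ)
    (hker : ∀ p : Fin N → ℝ, Bᵀ *ᵥ p = 0 ↔ ∃ c : ℝ, p = c • e)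
    (w : Fin N → ℝ) (hγ : w ⬝ᵥ e ≠ 0)
    (ρ : ℝ) (hρ : 0 < ρ)
    (S : Matrix (Fin N) (Fin N) ℝ)
    (hS : S = ρ • vecMulVec w w + B * A⁻¹ * Bᵀ) :
    S.PosDef := by
  have hrank : (ρ • vecMulVec w w).PosSemidef := by
    simpa using (posSemidef_vecMulVec_self_star w).smul hρ.le
  rw [← conjTranspose_eq_transpose_of_trivial] at hS hker
  subst hS
  refine hrank.posDef_add_of_dotProduct_mulVec_eq_zero
    (hA.inv.posSemidef.mul_mul_conjTranspose_same B) fun x hwx hBx => ?_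
  obtain ⟨c, rfl⟩ := (hker x).1
    ((hA.inv.star_dotProduct_mul_mul_conjTranspose_mulVec_eq_zero_iff B x).1 hBx)
  have hc : c = 0 := by
    simpa [smul_mulVec, dotProduct_vecMulVec_mulVec, dotProduct_comm e w, hρ.ne', hγ] using hwx
  simp [hc]

/-- if Null(Bᵀ) = span(e) where e is the normalized all-ones vector,
A is SPD, w a unit vector with wᵀe ≠ 0, ρ > 0, then S = ρ w wᵀ + B A⁻¹ Bᵀ is
symmetric positive definite. -/
theorem stmt13 {n N : ℕ} (hN : 0 < N)
    (B : Matrix (Fin N) (Fin n) ℝ)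
    (A : Matrix (Fin n) (Fin n) ℝ) (hA : A.PosDef)
    (e : Fin N → ℝ) (he : e = fun _ => 1 / Real.sqrt N)
    (hker : ∀ p : Fin N → ℝ, Bᵀ *ᵥ p = 0 ↔ ∃ c : ℝ, p = c • e)
    (w : Fin N → ℝ) (hw : w ⬝ᵥ w = 1) (hγ : w ⬝ᵥ e ≠ 0)
    (ρ : ℝ) (hρ : 0 < ρ)
    (S : Matrix (Fin N) (Fin N) ℝ)
    (hS : S = ρ • vecMulVec w w + B * A⁻¹ * Bᵀ) :
    S.PosDef :=
  stmt13_general B A hA e hker w hγ ρ hρ S hS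
end

section
/- Let 𝒜 = [[A, −Bᵀ], [−B, −ρ w wᵀ]] with A SPD and let Ŝ = ρ w wᵀ + M with M SPD, 𝒫 = diag(A, Ŝ). If λ ≠ 1 is an eigenvalue of 𝒫⁻¹𝒜 with eigenvector (u, p), p ≠ 0, then λ²·pᵀŜp − λ·pᵀMp − pᵀSp = 0, where S = ρ w wᵀ + B A⁻¹ Bᵀ. -/
/-!
The first block row gives `A⁻¹Bᵀp = (1 - λ) u`, so `pᵀ(BA⁻¹Bᵀ)p = (1 - λ) pᵀBu`, while testing
the second block row against `p` gives `-pᵀBu - ρ (wᵀp)² = λ pᵀŜp`. Eliminating `pᵀBu` between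
the two yields the quadratic relation.
-/

open Matrix

section

variable {m n K : Type*} [Fintype m] [Fintype n] [CommRing K]

lemma dotProduct_smul_vecMulVec_mulVec (ρ : K) (w p : m → K) :
    p ⬝ᵥ ((ρ • vecMulVec w w) *ᵥ p) = ρ * (w ⬝ᵥ p) ^ 2 := by
  rw [smul_mulVec, vecMulVec_mulVec, op_smul_eq_smul, dotProduct_smul, dotProduct_smul,
    dotProduct_comm p w, smul_eq_mul, smul_eq_mul]
  ring

lemma dotProduct_smul_vecMulVec_add_mulVec (ρ : K) (w p : m → K) (X : Matrix m m K) :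
    p ⬝ᵥ ((ρ • vecMulVec w w + X) *ᵥ p) = ρ * (w ⬝ᵥ p) ^ 2 + p ⬝ᵥ (X *ᵥ p) := by
  rw [add_mulVec, dotProduct_add, dotProduct_smul_vecMulVec_mulVec]

lemma dotProduct_mul_inv_mul_transpose_mulVec_of_eq [DecidableEq n] {A : Matrix n n K}
    (hA : IsUnit A) {B : Matrix m n K} {u : n → K} {p : m → K} {lam : K}
    (h : A *ᵥ u - Bᵀ *ᵥ p = lam • (A *ᵥ u)) :
    p ⬝ᵥ ((B * A⁻¹ * Bᵀ) *ᵥ p) = (1 - lam) * (p ⬝ᵥ (B *ᵥ u)) := by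
  have hBp : Bᵀ *ᵥ p = (1 - lam) • (A *ᵥ u) := by
    rw [sub_smul, one_smul, ← h, sub_sub_cancel]
  have hAinvBp : A⁻¹ *ᵥ (Bᵀ *ᵥ p) = (1 - lam) • u := by
    rw [hBp, mulVec_smul, mulVec_mulVec, nonsing_inv_mul A (A.isUnit_iff_isUnit_det.mp hA),
      one_mulVec]
  rw [Matrix.mul_assoc, ← mulVec_mulVec, ← mulVec_mulVec, hAinvBp, mulVec_smul,
    dotProduct_smul, smul_eq_mul]

end

theorem stmt15_general {n N : ℕ}
    (A : Matrix (Fin n) (Fin n) ℝ) (hA : A.PosDef)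
    (B : Matrix (Fin N) (Fin n) ℝ)
    (w : Fin N → ℝ) (ρ : ℝ)
    (M : Matrix (Fin N) (Fin N) ℝ)
    (Shat S : Matrix (Fin N) (Fin N) ℝ)
    (hShat : Shat = ρ • vecMulVec w w + M)
    (hS : S = ρ • vecMulVec w w + B * A⁻¹ * Bᵀ)
    (lam : ℝ)
    (u : Fin n → ℝ) (p : Fin N → ℝ)
    (heig1 : A *ᵥ u - Bᵀ *ᵥ p = lam • (A *ᵥ u))
    (heig2 : -(B *ᵥ u) - (ρ • vecMulVec w w) *ᵥ p = lam • (Shat *ᵥ p)) :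
    lam ^ 2 * (p ⬝ᵥ (Shat *ᵥ p)) - lam * (p ⬝ᵥ (M *ᵥ p)) - p ⬝ᵥ (S *ᵥ p) = 0 := by
  have hSchur := dotProduct_mul_inv_mul_transpose_mulVec_of_eq hA.isUnit heig1
  have hSecondRow : -(p ⬝ᵥ (B *ᵥ u)) - ρ * (w ⬝ᵥ p) ^ 2 = lam * (p ⬝ᵥ (Shat *ᵥ p)) := by
    have := congrArg (p ⬝ᵥ ·) heig2
    rwa [dotProduct_sub, dotProduct_neg, dotProduct_smul_vecMulVec_mulVec, dotProduct_smul,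
      smul_eq_mul] at this
  rw [hShat, dotProduct_smul_vecMulVec_add_mulVec] at hSecondRow ⊢
  rw [hS, dotProduct_smul_vecMulVec_add_mulVec, hSchur]
  linear_combination (1 - lam) * hSecondRow

/-- an eigenpair (λ, (u,p)) with λ ≠ 1 and p ≠ 0 of the block
diagonally preconditioned saddle point system satisfies
λ²·pᵀŜp − λ·pᵀMp − pᵀSp = 0 where S = ρwwᵀ + BA⁻¹Bᵀ and Ŝ = ρwwᵀ + M. -/
theorem stmt15 {n N : ℕ}
    (A : Matrix (Fin n) (Fin n) ℝ) (hA : A.PosDef)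
    (B : Matrix (Fin N) (Fin n) ℝ)
    (w : Fin N → ℝ) (hw : w ⬝ᵥ w = 1) (ρ : ℝ) (hρ : 0 < ρ)
    (M : Matrix (Fin N) (Fin N) ℝ) (hM : M.PosDef)
    (Shat S : Matrix (Fin N) (Fin N) ℝ)
    (hShat : Shat = ρ • vecMulVec w w + M)
    (hS : S = ρ • vecMulVec w w + B * A⁻¹ * Bᵀ)
    (lam : ℝ) (hlam : lam ≠ 1)
    (u : Fin n → ℝ) (p : Fin N → ℝ) (hp : p ≠ 0)
    (heig1 : A *ᵥ u - Bᵀ *ᵥ p = lam • (A *ᵥ u))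
    (heig2 : -(B *ᵥ u) - (ρ • vecMulVec w w) *ᵥ p = lam • (Shat *ᵥ p)) :
    lam ^ 2 * (p ⬝ᵥ (Shat *ᵥ p)) - lam * (p ⬝ᵥ (M *ᵥ p)) - p ⬝ᵥ (S *ᵥ p) = 0 :=
  stmt15_general A hA B w ρ M Shat S hShat hS lam u p heig1 heig2
end
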